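/- Let M = (S, A, X, T, i) be a parametric MDP with induced POMDP M', let p ∈ Dist(X) be a parameter distribution, and let r : Runs_X → ℝ be a measurable objective function. Set r' = r ∘ f⁻¹ and i'(s,x) = i(s)·p(x). Then the values coincide: Val^M(p,r) = Val^{M'}(r'), where Val^M(p,r) = sup over pMDP policies π_X of E^M_{π_X,i,p}(r) and Val^{M'}(r') = sup over POMDP policies π' of E^{M'}_{π',i'}(r'). -/

import Mathlib

/-!
The map `f` is a measurable isomorphism from `Runs_X` onto the runs of `M'`: along a run of
`M'` the parameter component never changes, and `f` carries each generator `{x} × Cone(h)` onto the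
cone of `f(x, h)`. Pair a pMDP policy `π_X` with the POMDP policy `h' ↦ π_X(x, O(h'))` for any `x`
compatible with the observation `O(h')`, and a POMDP policy `π'` with `(x, h) ↦ π'(f(x, h))`.
For paired policies the cone probabilities satisfy `P'(Cone f(x,h)) = p(x) · P_x(Cone h)` because
`i'(s, x) = i(s) p(x)`, so by uniqueness of measures on the π-system of cones `P'` is the image of
`P` under `f`, and `E'(r ∘ f⁻¹) = E(r)`. Hence both suprema range over the same set of values.
-/

open MeasureTheory ENNReal

namespace PMDPEncoding

universe u v w

variable {S : Type u} {A : Type v} {X : Type w}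

/-- An infinite alternating sequence of state-action pairs
(the `k`-th pair consists of the `k`-th state and the `k`-th action of the run). -/
abbrev RunSeq (S : Type u) (A : Type v) := ℕ → S × A

/-- `ρ` is a run of the MDP with transition function `T`:
all transitions have positive probability. -/
def IsRun (T : S → A → PMF S) (ρ : RunSeq S A) : Prop :=
  ∀ k, 0 < T (ρ k).1 (ρ k).2 (ρ (k + 1)).1

/-- A history: a finite list of state-action pairs followed by a final state. -/
abbrev Hist (S : Type u) (A : Type v) := List (S × A) × S

/-- The first state of a history. -/
def Hist.first (h : Hist S A) : S :=
  match h.1 with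
  | [] => h.2
  | p :: _ => p.1

/-- Auxiliary for `IsHist`: validity of the list part of a history with final state `t`. -/
def IsHistL (T : S → A → PMF S) : List (S × A) → S → Prop
  | [], _ => True
  | (s, a) :: rest, t => 0 < T s a (Hist.first (rest, t)) ∧ IsHistL T rest t

/-- `h` is a history (finite prefix of a run) of the MDP with transition function `T`. -/
def IsHist (T : S → A → PMF S) (h : Hist S A) : Prop := IsHistL T h.1 h.2

/-- The set of runs of the MDP with transition function `T`. -/
def Runs (T : S → A → PMF S) := {ρ : RunSeq S A // IsRun T ρ}

/-- The set of (raw) sequences having the history `h` as a prefix. -/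
def ConeSeq (h : Hist S A) : Set (RunSeq S A) :=
  {ρ | (∀ k, (hk : k < h.1.length) → ρ k = h.1[k]'hk) ∧ (ρ h.1.length).1 = h.2}

/-- The cone of a history: the set of runs with prefix `h`. -/
def Cone (T : S → A → PMF S) (h : Hist S A) : Set (Runs T) :=
  {ρ | ρ.1 ∈ ConeSeq h}

/-- The σ-algebra on runs generated by the cones of histories. -/
instance conesAlg (T : S → A → PMF S) : MeasurableSpace (Runs T) :=
  MeasurableSpace.generateFrom {C | ∃ h : Hist S A, IsHist T h ∧ C = Cone T h}

/-- Valid histories of an MDP, as a subtype. -/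
def HistOf (T : S → A → PMF S) := {h : Hist S A // IsHist T h}

/-- Auxiliary function for the probability of a cone:
`pre` is the prefix of the history processed so far. -/
noncomputable def coneProbAux (T : S → A → PMF S) (π : Hist S A → PMF A) :
    List (S × A) → List (S × A) → S → ℝ≥0∞
  | _, [], _ => 1
  | pre, (s, a) :: rest, t =>
      π (pre, s) a * T s a (Hist.first (rest, t)) *
        coneProbAux T π (pre ++ [(s, a)]) rest t

/-- The probability `i(s₀) · ∏_{k<n} π(s₀a₀…s_k)(a_k) · T(s_k,a_k)(s_{k+1})` that the
induced measure of policy `π` and initial distribution `i` assigns to the cone of a history. -/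
noncomputable def coneProb (T : S → A → PMF S) (i : PMF S) (π : Hist S A → PMF A)
    (h : Hist S A) : ℝ≥0∞ :=
  i h.first * coneProbAux T π [] h.1 h.2

/-- The evaluated transition function `T_x` of a pMDP at parameter point `x`. -/
def evalT (T : S → A → X → PMF S) (x : X) : S → A → PMF S := fun s a => T s a x

/-- Runs of a pMDP: pairs `(x, ρ)` of a parameter value `x` and a run `ρ` of `M(x)`. -/
def RunsX (T : S → A → X → PMF S) := {q : X × RunSeq S A // IsRun (evalT T q.1) q.2}

/-- Valid histories of a pMDP: pairs `(x, h)` with `h` a history of `M(x)`. -/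
def HistX (T : S → A → X → PMF S) := {q : X × Hist S A // IsHist (evalT T q.1) q.2}

/-- The generator set `{x} × Cone(h)` of the σ-algebra on the runs of a pMDP. -/
def ConeX (T : S → A → X → PMF S) (x : X) (h : Hist S A) : Set (RunsX T) :=
  {q | q.1.1 = x ∧ q.1.2 ∈ ConeSeq h}

/-- The σ-algebra on the runs of a pMDP generated by the sets `{x} × Cone(h)`. -/
instance conesXAlg (T : S → A → X → PMF S) : MeasurableSpace (RunsX T) :=
  MeasurableSpace.generateFrom
    {C | ∃ (x : X) (h : Hist S A), IsHist (evalT T x) h ∧ C = ConeX T x h}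

/-- The transition function `T'` of the induced POMDP of a pMDP:
`T'((s,x),a)(s',x') = T(s,a)(x)(s') · δ_x(x')`. -/
noncomputable def indT (T : S → A → X → PMF S) : S × X → A → PMF (S × X) :=
  fun sx a => (T sx.1 a sx.2).map fun s' => (s', sx.2)

/-- The observation function of the induced POMDP: `O(s,x) = s`. -/
def obs : S × X → S := Prod.fst

/-- The observation map extended to histories of the induced POMDP. -/
def obsHist : Hist (S × X) A → Hist S A :=
  fun h => (h.1.map fun p => (p.1.1, p.2), h.2.1)

/-- The map `f` on raw sequences: `f(x, s₀·a₀·s₁·⋯) = (s₀,x)·a₀·(s₁,x)·⋯`. -/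
def fSeq (x : X) (ρ : RunSeq S A) : RunSeq (S × X) A :=
  fun k => (((ρ k).1, x), (ρ k).2)

theorem indT_pos {T : S → A → X → PMF S} {s s' : S} {a : A} {x : X}
    (h : 0 < T s a x s') : 0 < indT T (s, x) a (s', x) := by
  have hmem : (s', x) ∈ ((T s a x).map fun u => (u, x)).support := by
    rw [PMF.support_map]
    exact ⟨s', (PMF.mem_support_iff _ _).2 h.ne', rfl⟩
  exact pos_iff_ne_zero.mpr ((PMF.mem_support_iff _ _).1 hmem)

/-- The map `f : Runs_X → Runs'` from the runs of a pMDP to the runs of its induced POMDP. -/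
def fRun (T : S → A → X → PMF S) (q : RunsX T) : Runs (indT T) :=
  ⟨fSeq q.1.1 q.1.2, fun k => indT_pos (q.2 k)⟩

/-- The map `f` on raw histories: `f(x, s₀·a₀·⋯·s_n) = (s₀,x)·a₀·⋯·(s_n,x)`. -/
def fHistSeq (x : X) (h : Hist S A) : Hist (S × X) A :=
  (h.1.map fun p => ((p.1, x), p.2), (h.2, x))

theorem isHist_fHistSeq (T : S → A → X → PMF S) (x : X) :
    ∀ (l : List (S × A)) (t : S), IsHist (evalT T x) (l, t) →
      IsHist (indT T) (fHistSeq x (l, t))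
  | [], _, _ => trivial
  | (s, a) :: rest, t, hv => by
      obtain ⟨h1, h2⟩ := hv
      have hrec := isHist_fHistSeq T x rest t h2
      refine ⟨?_, hrec⟩
      show 0 < indT T (s, x) a (Hist.first ((rest.map fun p => ((p.1, x), p.2)), (t, x)))
      have hfirst : Hist.first ((rest.map fun p => ((p.1, x), p.2) : List ((S × X) × A)), (t, x)) =
          (Hist.first (rest, t), x) := by
        cases rest <;> rfl
      rw [hfirst]
      exact indT_pos h1

/-- The map `f : Hist_X → Hist'` from the histories of a pMDP to the histories of
its induced POMDP. -/
def fHistX (T : S → A → X → PMF S) (q : HistX T) : HistOf (indT T) :=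
  ⟨fHistSeq q.1.1 q.1.2, isHist_fHistSeq T q.1.1 q.1.2.1 q.1.2.2 q.2⟩

/-- Some run of an MDP: start anywhere, always pick a fixed action, and follow the
support of the transition distributions. -/
noncomputable def someRunSeq (T : S → A → PMF S) (sa : S × A) (a : A) : RunSeq S A :=
  fun k => Nat.rec sa (fun _ ih => ((PMF.support_nonempty (T ih.1 ih.2)).some, a)) k

theorem someRunSeq_isRun (T : S → A → PMF S) (sa : S × A) (a : A) :
    IsRun T (someRunSeq T sa a) := by
  intro k
  exact pos_iff_ne_zero.mpr <| (PMF.mem_support_iff _ _).1 <|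
    (PMF.support_nonempty (T (someRunSeq T sa a k).1 (someRunSeq T sa a k).2)).some_mem

instance instNonemptyRuns [Nonempty S] [Nonempty A] (T : S → A → PMF S) :
    Nonempty (Runs T) :=
  ⟨⟨someRunSeq T (Classical.arbitrary S, Classical.arbitrary A) (Classical.arbitrary A),
    someRunSeq_isRun _ _ _⟩⟩

instance instNonemptyRunsX [Nonempty S] [Nonempty A] [Nonempty X] (T : S → A → X → PMF S) :
    Nonempty (RunsX T) :=
  ⟨⟨(Classical.arbitrary X,
      someRunSeq (evalT T (Classical.arbitrary X))
        (Classical.arbitrary S, Classical.arbitrary A) (Classical.arbitrary A)),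
    someRunSeq_isRun _ _ _⟩⟩

instance instNonemptyHistX [Nonempty S] [Nonempty X] (T : S → A → X → PMF S) :
    Nonempty (HistX T) :=
  ⟨⟨(Classical.arbitrary X, ([], Classical.arbitrary S)), trivial⟩⟩

instance instNonemptyHistOf [Nonempty S] (T : S → A → PMF S) :
    Nonempty (HistOf T) :=
  ⟨⟨([], Classical.arbitrary S), trivial⟩⟩

lemma Hist.first_map {S' : Type*} {A' : Type*} (f : S → S') (g : S × A → S' × A')
    (hg : ∀ q, (g q).1 = f q.1) (l : List (S × A)) (t : S) :
    Hist.first (l.map g, f t) = f (Hist.first (l, t)) := by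
  cases l with
  | nil => rfl
  | cons q l => exact hg q

lemma Hist.first_append (l₁ l₂ : List (S × A)) (t : S) :
    Hist.first (l₁ ++ l₂, t) = Hist.first (l₁, Hist.first (l₂, t)) := by
  cases l₁ <;> rfl

lemma IsHistL.of_append {T : S → A → PMF S} :
    ∀ {l₁ l₂ : List (S × A)} {t : S}, IsHistL T (l₁ ++ l₂) t →
      IsHistL T l₁ (Hist.first (l₂, t))
  | [], _, _, _ => trivial
  | (_, _) :: l₁, l₂, t, ⟨h, hl⟩ => ⟨Hist.first_append l₁ l₂ t ▸ h, hl.of_append⟩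

lemma indT_apply_mk (T : S → A → X → PMF S) (s s' : S) (a : A) (x : X) :
    indT T (s, x) a (s', x) = T s a x s' := by
  rw [indT, PMF.map_apply, tsum_eq_single s']
  · simp
  · intro u hu
    simp [Prod.ext_iff, hu.symm]

lemma indT_pos_iff {T : S → A → X → PMF S} {s : S} {a : A} {x : X} {q : S × X} :
    0 < indT T (s, x) a q ↔ q.2 = x ∧ 0 < T s a x q.1 := by
  constructor
  · intro h
    have hq : q ∈ (indT T (s, x) a).support := (PMF.mem_support_iff _ _).2 h.ne'
    rw [indT, PMF.support_map] at hq
    obtain ⟨u, hu, rfl⟩ := hq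
    exact ⟨rfl, pos_iff_ne_zero.2 ((PMF.mem_support_iff _ _).1 hu)⟩
  · rintro ⟨rfl, h⟩
    exact indT_pos h

lemma obsHist_fHistSeq (x : X) (h : Hist S A) : obsHist (fHistSeq x h) = h := by
  simp [obsHist, fHistSeq, Function.comp_def]

/-- The second conjunct says that every parameter entry of `l` is `x`. -/
lemma isHistL_indT {T : S → A → X → PMF S} {t : S} {x : X} :
    ∀ {l : List ((S × X) × A)}, IsHistL (indT T) l (t, x) →
      IsHistL (evalT T x) (l.map fun q => (q.1.1, q.2)) t ∧
        (l.map fun q => ((q.1.1, x), q.2)) = l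
  | [], _ => ⟨trivial, rfl⟩
  | ((s, y), a) :: l, ⟨h, hl⟩ => by
      obtain ⟨hv, hmap⟩ := isHistL_indT hl
      have hfirst :
          Hist.first (l, (t, x)) = (Hist.first (l.map fun q => (q.1.1, q.2), t), x) :=
        calc Hist.first (l, (t, x))
            = Hist.first (l.map fun q => ((q.1.1, x), q.2), ((t, x).1, x)) := by rw [hmap]
          _ = ((Hist.first (l, (t, x))).1, x) :=
              Hist.first_map (fun q : S × X => (q.1, x)) _ (fun _ => rfl) l (t, x)
          _ = (Hist.first (l.map fun q => (q.1.1, q.2), t), x) := by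
              rw [Hist.first_map Prod.fst (fun q : (S × X) × A => (q.1.1, q.2))
                (fun _ => rfl) l (t, x)]
      rw [hfirst] at h
      obtain ⟨rfl, hpos⟩ := indT_pos_iff.1 h
      exact ⟨⟨hpos, hv⟩, by rw [List.map_cons, hmap]⟩

lemma exists_fHistSeq_of_isHist_indT {T : S → A → X → PMF S} {h' : Hist (S × X) A}
    (hv : IsHist (indT T) h') : ∃ x h, IsHist (evalT T x) h ∧ fHistSeq x h = h' := by
  obtain ⟨l, t, x⟩ := h'
  obtain ⟨hv, hmap⟩ := isHistL_indT hv
  exact ⟨x, obsHist (l, (t, x)), hv, by simp [fHistSeq, obsHist, Function.comp_def, hmap]⟩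

lemma isRun_indT_snd {T : S → A → X → PMF S} {ρ : RunSeq (S × X) A}
    (hρ : IsRun (indT T) ρ) (k : ℕ) : (ρ k).1.2 = (ρ 0).1.2 := by
  induction k with
  | zero => rfl
  | succ k ih => rw [← ih]; exact (indT_pos_iff.1 (hρ k)).1

lemma fRun_preimage_cone (T : S → A → X → PMF S) (x : X) (h : Hist S A) :
    fRun T ⁻¹' Cone (indT T) (fHistSeq x h) = ConeX T x h := by
  ext ⟨⟨y, ρ⟩, _⟩
  change fSeq y ρ ∈ ConeSeq (fHistSeq x h) ↔ y = x ∧ ρ ∈ ConeSeq h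
  simp only [fSeq, fHistSeq, ConeSeq, Set.mem_ofPred_eq, List.length_map, List.getElem_map,
    Prod.ext_iff]
  grind

lemma fRun_injective (T : S → A → X → PMF S) : Function.Injective (fRun T) := by
  rintro ⟨⟨x, ρ⟩, _⟩ ⟨⟨x', ρ'⟩, _⟩ he
  have he' : fSeq x ρ = fSeq x' ρ' := congrArg Subtype.val he
  obtain rfl : x = x' := congrArg (fun ρ => (ρ 0).1.2) he'
  obtain rfl : ρ = ρ' := funext fun k =>
    Prod.ext (congrArg (fun ρ => (ρ k).1.1) he') (congrArg (fun ρ => (ρ k).2) he')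
  rfl

lemma fRun_surjective (T : S → A → X → PMF S) : Function.Surjective (fRun T) := by
  rintro ⟨ρ, hρ⟩
  refine ⟨⟨((ρ 0).1.2, fun k => ((ρ k).1.1, (ρ k).2)), fun k => ?_⟩, ?_⟩
  · have h := (indT_pos_iff.1 (hρ k)).2
    rwa [isRun_indT_snd hρ k] at h
  · exact Subtype.ext <| funext fun k => by simp [fRun, fSeq, ← isRun_indT_snd hρ k]

lemma measurable_fRun (T : S → A → X → PMF S) : Measurable (fRun T) := by
  refine measurable_generateFrom ?_
  rintro _ ⟨h', hv, rfl⟩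
  obtain ⟨x, h, hxh, rfl⟩ := exists_fHistSeq_of_isHist_indT hv
  rw [fRun_preimage_cone]
  exact MeasurableSpace.measurableSet_generateFrom ⟨x, h, hxh, rfl⟩

noncomputable def fRunMeasurableEquiv (T : S → A → X → PMF S) :
    RunsX T ≃ᵐ Runs (indT T) where
  toEquiv := Equiv.ofBijective (fRun T) ⟨fRun_injective T, fRun_surjective T⟩
  measurable_toFun := measurable_fRun T
  measurable_invFun := by
    refine measurable_generateFrom ?_
    rintro _ ⟨x, h, hv, rfl⟩
    rw [← fRun_preimage_cone]
    exact (Equiv.ofBijective _ _).symm_preimage_preimage _ ▸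
      MeasurableSpace.measurableSet_generateFrom ⟨_, isHist_fHistSeq T x h.1 h.2 hv, rfl⟩

lemma integral_map_fRun_comp_invFun {T : S → A → X → PMF S} [Nonempty (RunsX T)]
    (μ : Measure (RunsX T)) (r : RunsX T → ℝ) :
    ∫ ρ, r (Function.invFun (fRun T) ρ) ∂(μ.map (fRun T)) = ∫ q, r q ∂μ := by
  change ∫ ρ, r (Function.invFun (fRun T) ρ) ∂(μ.map (fRunMeasurableEquiv T)) = _
  rw [integral_map_equiv]
  exact integral_congr_ae (.of_forall fun q =>
    congrArg r (Function.leftInverse_invFun (fRun_injective T) q))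

def IsPolicyLift (T : S → A → X → PMF S) (πX : X × Hist S A → PMF A)
    (π' : Hist (S × X) A → PMF A) : Prop :=
  ∀ x h, IsHist (evalT T x) h → π' (fHistSeq x h) = πX (x, h)

lemma coneProbAux_fHistSeq {T : S → A → X → PMF S} {x : X} {πX : X × Hist S A → PMF A}
    {π' : Hist (S × X) A → PMF A} (hπ : IsPolicyLift T πX π') :
    ∀ (l pre : List (S × A)) (t : S), IsHistL (evalT T x) (pre ++ l) t →
      coneProbAux (indT T) π' (pre.map fun q => ((q.1, x), q.2))
          (l.map fun q => ((q.1, x), q.2)) (t, x) =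
        coneProbAux (evalT T x) (fun h => πX (x, h)) pre l t
  | [], _, _, _ => rfl
  | (s, a) :: l, pre, t, hv => by
      have hrec := coneProbAux_fHistSeq hπ l (pre ++ [(s, a)]) t (by simpa using hv)
      simp only [List.map_append, List.map_cons, List.map_nil] at hrec
      change π' (fHistSeq x (pre, s)) a *
          indT T (s, x) a (Hist.first (l.map fun q => ((q.1, x), q.2), (t, x))) *
          coneProbAux (indT T) π' (pre.map (fun q => ((q.1, x), q.2)) ++ [((s, x), a)])
            (l.map fun q => ((q.1, x), q.2)) (t, x) = _
      rw [hπ x (pre, s) hv.of_append, Hist.first_map (fun s => (s, x)) _ (fun _ => rfl),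
        indT_apply_mk, hrec]
      rfl

lemma coneProb_fHistSeq {T : S → A → X → PMF S} {i : PMF S} {p : PMF X} {i' : PMF (S × X)}
    (hi' : ∀ s x, i' (s, x) = i s * p x) {πX : X × Hist S A → PMF A}
    {π' : Hist (S × X) A → PMF A} (hπ : IsPolicyLift T πX π') {x : X} {h : Hist S A}
    (hv : IsHist (evalT T x) h) :
    coneProb (indT T) i' π' (fHistSeq x h) =
      p x * coneProb (evalT T x) i (fun h => πX (x, h)) h := by
  obtain ⟨l, t⟩ := h
  change i' (Hist.first (l.map fun q => ((q.1, x), q.2), (t, x))) * _ = _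
  rw [Hist.first_map (fun s => (s, x)) _ (fun _ => rfl), hi',
    coneProb, ← coneProbAux_fHistSeq hπ l [] t hv, mul_comm (i _), mul_assoc]
  rfl

lemma coneSeq_subset_of_inter_nonempty {h₁ h₂ : Hist S A} (hlen : h₁.1.length ≤ h₂.1.length)
    (hne : (ConeSeq h₁ ∩ ConeSeq h₂).Nonempty) : ConeSeq h₂ ⊆ ConeSeq h₁ := by
  obtain ⟨ρ₀, ⟨ha₁, hb₁⟩, ha₂, hb₂⟩ := hne
  rintro ρ ⟨ha, hb⟩
  refine ⟨fun k hk => ?_, ?_⟩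
  · rw [ha k (hk.trans_le hlen), ← ha₂ k (hk.trans_le hlen), ha₁ k hk]
  · rw [← hb₁]
    rcases hlen.lt_or_eq with hlt | heq
    · rw [ha _ hlt, ha₂ _ hlt]
    · rw [heq, hb, hb₂]

lemma isPiSystem_cones (T : S → A → PMF S) :
    IsPiSystem {C : Set (Runs T) | ∃ h : Hist S A, IsHist T h ∧ C = Cone T h} := by
  have key : ∀ h₁ h₂ : Hist S A, h₁.1.length ≤ h₂.1.length →
      (Cone T h₁ ∩ Cone T h₂).Nonempty → Cone T h₁ ∩ Cone T h₂ = Cone T h₂ :=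
    fun _ _ hlen ⟨ρ, hρ⟩ => Set.inter_eq_self_of_subset_right fun _ hρ' =>
      coneSeq_subset_of_inter_nonempty hlen ⟨ρ.1, hρ⟩ hρ'
  rintro _ ⟨h₁, hv₁, rfl⟩ _ ⟨h₂, hv₂, rfl⟩ hne
  rcases le_total h₁.1.length h₂.1.length with hle | hle
  · exact ⟨h₂, hv₂, key h₁ h₂ hle hne⟩
  · rw [Set.inter_comm] at hne ⊢
    exact ⟨h₁, hv₁, key h₂ h₁ hle hne⟩

lemma map_fRun_eq {T : S → A → X → PMF S} {i : PMF S} {p : PMF X} {i' : PMF (S × X)}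
    (hi' : ∀ s x, i' (s, x) = i s * p x) {πX : X × Hist S A → PMF A}
    {π' : Hist (S × X) A → PMF A} (hπ : IsPolicyLift T πX π') {μ : Measure (RunsX T)}
    {ν : Measure (Runs (indT T))} [IsProbabilityMeasure μ] [IsProbabilityMeasure ν]
    (hμ : ∀ x h, IsHist (evalT T x) h →
      μ (ConeX T x h) = p x * coneProb (evalT T x) i (fun h => πX (x, h)) h)
    (hν : ∀ h', IsHist (indT T) h' → ν (Cone (indT T) h') = coneProb (indT T) i' π' h') :
    μ.map (fRun T) = ν := by
  have := Measure.isProbabilityMeasure_map (μ := μ) (measurable_fRun T).aemeasurable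
  refine ext_of_generate_finite _ rfl (isPiSystem_cones (indT T)) ?_ (by simp)
  rintro _ ⟨h', hv, rfl⟩
  obtain ⟨x, h, hxh, rfl⟩ := exists_fHistSeq_of_isHist_indT hv
  rw [Measure.map_apply (measurable_fRun T)
      (MeasurableSpace.measurableSet_generateFrom ⟨_, hv, rfl⟩), fRun_preimage_cone, hμ x h hxh,
    hν _ hv, coneProb_fHistSeq hi' hπ hxh]

/-- When `πX` is a pMDP policy, the compatible parameter value picked by `epsilon` is
immaterial. -/
noncomputable def obsPolicy [Nonempty X] (T : S → A → X → PMF S)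
    (πX : X × Hist S A → PMF A) : Hist (S × X) A → PMF A :=
  fun h' => πX (Classical.epsilon fun y => IsHist (evalT T y) (obsHist h'), obsHist h')

lemma isPolicyLift_obsPolicy [Nonempty X] {T : S → A → X → PMF S}
    {πX : X × Hist S A → PMF A}
    (hπX : ∀ x y h, IsHist (evalT T x) h → IsHist (evalT T y) h → πX (x, h) = πX (y, h)) :
    IsPolicyLift T πX (obsPolicy T πX) := fun x h hv => by
  rw [obsPolicy, obsHist_fHistSeq]
  exact hπX _ _ _ (Classical.epsilon_spec (p := fun y => IsHist (evalT T y) h) ⟨x, hv⟩) hv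

theorem value_correspondence_general [Nonempty S] [Nonempty A] [Nonempty X]
    (T : S → A → X → PMF S) (i : PMF S) (p : PMF X)
    (i' : PMF (S × X)) (hi' : ∀ s x, i' (s, x) = i s * p x)
    (PM : (X × Hist S A → PMF A) → Measure (RunsX T))
    (hPMprob : ∀ πX, IsProbabilityMeasure (PM πX))
    (hPM : ∀ (πX : X × Hist S A → PMF A) (x : X) (h : Hist S A), IsHist (evalT T x) h →
      PM πX (ConeX T x h) = p x * coneProb (evalT T x) i (fun h => πX (x, h)) h)
    (PO : (Hist (S × X) A → PMF A) → Measure (Runs (indT T)))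
    (hPOprob : ∀ π', IsProbabilityMeasure (PO π'))
    (hPO : ∀ (π' : Hist (S × X) A → PMF A) (h' : Hist (S × X) A), IsHist (indT T) h' →
      PO π' (Cone (indT T) h') = coneProb (indT T) i' π' h')
    (r : RunsX T → ℝ) :
    (⨆ πX : {π : X × Hist S A → PMF A // ∀ (x y : X) (h : Hist S A),
        IsHist (evalT T x) h → IsHist (evalT T y) h → π (x, h) = π (y, h)},
      ∫ q, r q ∂(PM πX.1)) =
    (⨆ π' : {π : Hist (S × X) A → PMF A // ∀ h1 h2 : Hist (S × X) A,
        IsHist (indT T) h1 → IsHist (indT T) h2 → obsHist h1 = obsHist h2 → π h1 = π h2},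
      ∫ ρ, r (Function.invFun (fRun T) ρ) ∂(PO π'.1)) := by
  have hvalue : ∀ πX π', IsPolicyLift T πX π' →
      ∫ ρ, r (Function.invFun (fRun T) ρ) ∂(PO π') = ∫ q, r q ∂(PM πX) := fun πX π' hπ => by
    have := hPMprob πX
    have := hPOprob π'
    rw [← map_fRun_eq hi' hπ (hPM πX) (hPO π'), integral_map_fRun_comp_invFun]
  refine congrArg sSup (Set.ext fun v => ⟨?_, ?_⟩)
  · rintro ⟨πX, rfl⟩
    refine ⟨⟨obsPolicy T πX.1, fun h₁ h₂ _ _ hobs => ?_⟩,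
      hvalue _ _ (isPolicyLift_obsPolicy πX.2)⟩
    simp only [obsPolicy, hobs]
  · rintro ⟨π', rfl⟩
    refine ⟨⟨fun q => π'.1 (fHistSeq q.1 q.2), fun x y h hx hy => ?_⟩,
      (hvalue _ _ fun _ _ _ => rfl).symm⟩
    exact π'.2 _ _ (isHist_fHistSeq T x h.1 h.2 hx) (isHist_fHistSeq T y h.1 h.2 hy)
      (by rw [obsHist_fHistSeq, obsHist_fHistSeq])

/-- Let `M` be a pMDP with induced POMDP `M'`, `p ∈ Dist(X)` a parameter
distribution, and `r : Runs_X → ℝ` a measurable objective. Set `r' = r ∘ f⁻¹` and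
`i'(s,x) = i(s)·p(x)`. Then the values coincide: `Val^M(p,r) = Val^{M'}(r')`, where
`Val^M(p,r)` is the supremum of `E^M_{π_X,i,p}(r)` over all pMDP policies `π_X` and
`Val^{M'}(r')` is the supremum of `E^{M'}_{π',i'}(r')` over all POMDP policies `π'`. -/
theorem value_correspondence [Nonempty S] [Nonempty A] [Nonempty X]
    (T : S → A → X → PMF S) (i : PMF S) (p : PMF X)
    (i' : PMF (S × X)) (hi' : ∀ s x, i' (s, x) = i s * p x)
    (PM : (X × Hist S A → PMF A) → Measure (RunsX T))
    (hPMprob : ∀ πX, IsProbabilityMeasure (PM πX))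
    (hPM : ∀ (πX : X × Hist S A → PMF A) (x : X) (h : Hist S A), IsHist (evalT T x) h →
      PM πX (ConeX T x h) = p x * coneProb (evalT T x) i (fun h => πX (x, h)) h)
    (PO : (Hist (S × X) A → PMF A) → Measure (Runs (indT T)))
    (hPOprob : ∀ π', IsProbabilityMeasure (PO π'))
    (hPO : ∀ (π' : Hist (S × X) A → PMF A) (h' : Hist (S × X) A), IsHist (indT T) h' →
      PO π' (Cone (indT T) h') = coneProb (indT T) i' π' h')
    (r : RunsX T → ℝ) (hr : Measurable r) :
    (⨆ πX : {π : X × Hist S A → PMF A // ∀ (x y : X) (h : Hist S A),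
        IsHist (evalT T x) h → IsHist (evalT T y) h → π (x, h) = π (y, h)},
      ∫ q, r q ∂(PM πX.1)) =
    (⨆ π' : {π : Hist (S × X) A → PMF A // ∀ h1 h2 : Hist (S × X) A,
        IsHist (indT T) h1 → IsHist (indT T) h2 → obsHist h1 = obsHist h2 → π h1 = π h2},
      ∫ ρ, r (Function.invFun (fRun T) ρ) ∂(PO π'.1)) :=
  value_correspondence_general T i p i' hi' PM hPMprob hPM PO hPOprob hPO r

end PMDPEncoding
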